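/- arXiv:1011.3059 — 3 statements merged into one kernel-verified Lean document; each statement's English description precedes it below -/
import Mathlib

section
/- In 2D with σ₀ ≡ 1 and U_j = e_j (so u_j = x_j), suppose v_1, v_2, ρ ∈ C³(Ω) satisfy 2∂v_1/∂x_1 + ρ = g_{1,1}, 2∂v_2/∂x_2 + ρ = g_{2,2}, ∂v_1/∂x_2 + ∂v_2/∂x_1 = g_{1,2}, and Δv_j = -∂ρ/∂x_j for j=1,2. Then Δρ = ½(∂²/∂x_1² - ∂²/∂x_2²)(g_{2,2} - g_{1,1}) - 2 ∂²g_{1,2}/∂x_1∂x_2. -/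
/-!
Write `a = ∂₁v₁`, `b = ∂₂v₂`. The first three equations express `g₂₂ - g₁₁ = 2 (b - a)` and
`g₁₂ = ∂₂v₁ + ∂₁v₂` through first derivatives of `v`, and differentiating `Δv_j = -∂_jρ` once more
gives `Δρ = -∂₁Δv₁ - ∂₂Δv₂`. Both sides of the claimed identity thus become linear combinations
of third derivatives of `v₁, v₂`, which agree once mixed partials are allowed to commute.
-/

noncomputable section

/-- Partial derivative in the `i`-th coordinate direction. -/
def pd {n : ℕ} (i : Fin n) (f : EuclideanSpace ℝ (Fin n) → ℝ)
    (x : EuclideanSpace ℝ (Fin n)) : ℝ :=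
  fderiv ℝ f x (EuclideanSpace.single i 1)

open Set

section PartialDerivatives

variable {n : ℕ} {f g p q : EuclideanSpace ℝ (Fin n) → ℝ} {Ω : Set (EuclideanSpace ℝ (Fin n))}
  {i j k l : Fin n} {m N : WithTop ℕ∞}

lemma pd_eqOn (hΩ : IsOpen Ω) (h : EqOn f g Ω) : EqOn (pd i f) (pd i g) Ω := fun x hx => by
  unfold pd
  rw [Filter.EventuallyEq.fderiv_eq (Filter.eventuallyEq_of_mem (hΩ.mem_nhds hx) h)]

lemma pd_linear_combination (a b : ℝ) {x : EuclideanSpace ℝ (Fin n)}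
    (hp : DifferentiableAt ℝ p x) (hq : DifferentiableAt ℝ q x) :
    pd i (fun y => a * p y + b * q y) x = a * pd i p x + b * pd i q x := by
  unfold pd
  rw [fderiv_fun_add (hp.const_mul a) (hq.const_mul b), fderiv_const_mul hp, fderiv_const_mul hq]
  rfl

lemma pd_eqOn_linear_combination (hΩ : IsOpen Ω) {a b : ℝ} (hp : DifferentiableOn ℝ p Ω)
    (hq : DifferentiableOn ℝ q Ω) (h : EqOn f (fun y => a * p y + b * q y) Ω) :
    EqOn (pd i f) (fun y => a * pd i p y + b * pd i q y) Ω := fun x hx => by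
  rw [pd_eqOn hΩ h hx]
  exact pd_linear_combination a b ((hp x hx).differentiableAt (hΩ.mem_nhds hx))
    ((hq x hx).differentiableAt (hΩ.mem_nhds hx))

lemma ContDiffOn.pd_of_isOpen (hΩ : IsOpen Ω) (hf : ContDiffOn ℝ N f Ω) (hmN : m + 1 ≤ N) :
    ContDiffOn ℝ m (pd i f) Ω :=
  (hf.fderiv_of_isOpen hΩ hmN).clm_apply contDiffOn_const

lemma ContDiffOn.differentiableOn_pd (hΩ : IsOpen Ω) (hf : ContDiffOn ℝ 2 f Ω) :
    DifferentiableOn ℝ (pd i f) Ω :=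
  (hf.pd_of_isOpen (m := 1) hΩ (by norm_num)).differentiableOn one_ne_zero

lemma ContDiffOn.differentiableOn_pd_pd (hΩ : IsOpen Ω) (hf : ContDiffOn ℝ 3 f Ω) :
    DifferentiableOn ℝ (pd i (pd j f)) Ω :=
  (hf.pd_of_isOpen (m := 2) hΩ (by norm_num)).differentiableOn_pd hΩ

lemma pd_pd_eqOn_linear_combination (hΩ : IsOpen Ω) {a b : ℝ} (hp : ContDiffOn ℝ 3 p Ω)
    (hq : ContDiffOn ℝ 3 q Ω) (h : EqOn f (fun y => a * pd k p y + b * pd l q y) Ω) :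
    EqOn (pd i (pd j f))
      (fun y => a * pd i (pd j (pd k p)) y + b * pd i (pd j (pd l q)) y) Ω :=
  pd_eqOn_linear_combination hΩ (hp.differentiableOn_pd_pd hΩ) (hq.differentiableOn_pd_pd hΩ)
    (pd_eqOn_linear_combination hΩ ((hp.of_le (by norm_num)).differentiableOn_pd hΩ)
      ((hq.of_le (by norm_num)).differentiableOn_pd hΩ) h)

lemma pd_pd_apply_eq_fderiv_fderiv {x : EuclideanSpace ℝ (Fin n)}
    (hf : DifferentiableAt ℝ (fderiv ℝ f) x) :
    pd i (pd j f) x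
      = fderiv ℝ (fderiv ℝ f) x (EuclideanSpace.single i 1) (EuclideanSpace.single j 1) := by
  unfold pd
  rw [fderiv_clm_apply hf (differentiableAt_const _)]
  simp

lemma pd_comm (hΩ : IsOpen Ω) (hf : ContDiffOn ℝ 2 f Ω) :
    EqOn (pd i (pd j f)) (pd j (pd i f)) Ω := fun x hx => by
  have hfx : ContDiffAt ℝ 2 f x := hf.contDiffAt (hΩ.mem_nhds hx)
  have hf' : DifferentiableAt ℝ (fderiv ℝ f) x :=
    (hfx.fderiv_right (m := 1) le_rfl).differentiableAt one_ne_zero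
  rw [pd_pd_apply_eq_fderiv_fderiv hf', pd_pd_apply_eq_fderiv_fderiv hf',
    (hfx.isSymmSndFDerivAt (by simp)).eq]

lemma pd_pd_pd_comm_outer (hΩ : IsOpen Ω) (hf : ContDiffOn ℝ 3 f Ω) :
    EqOn (pd i (pd j (pd k f))) (pd j (pd i (pd k f))) Ω :=
  pd_comm hΩ (hf.pd_of_isOpen hΩ (by norm_num))

lemma pd_pd_pd_comm_inner (hΩ : IsOpen Ω) (hf : ContDiffOn ℝ 3 f Ω) :
    EqOn (pd i (pd j (pd k f))) (pd i (pd k (pd j f))) Ω :=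
  pd_eqOn hΩ (pd_comm hΩ (hf.of_le (by norm_num)))

end PartialDerivatives

theorem stmt4_general (Ω : Set (EuclideanSpace ℝ (Fin 2))) (hΩ : IsOpen Ω)
    (v₁ v₂ ρ g₁₁ g₂₂ g₁₂ : EuclideanSpace ℝ (Fin 2) → ℝ)
    (hv₁ : ContDiffOn ℝ 3 v₁ Ω) (hv₂ : ContDiffOn ℝ 3 v₂ Ω)
    (h1 : ∀ x ∈ Ω, 2 * pd 0 v₁ x + ρ x = g₁₁ x)
    (h2 : ∀ x ∈ Ω, 2 * pd 1 v₂ x + ρ x = g₂₂ x)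
    (h3 : ∀ x ∈ Ω, pd 1 v₁ x + pd 0 v₂ x = g₁₂ x)
    (h4 : ∀ x ∈ Ω, pd 0 (pd 0 v₁) x + pd 1 (pd 1 v₁) x = - pd 0 ρ x)
    (h5 : ∀ x ∈ Ω, pd 0 (pd 0 v₂) x + pd 1 (pd 1 v₂) x = - pd 1 ρ x) :
    ∀ x ∈ Ω,
      pd 0 (pd 0 ρ) x + pd 1 (pd 1 ρ) x
        = (1/2) * (pd 0 (pd 0 (fun y => g₂₂ y - g₁₁ y)) x
            - pd 1 (pd 1 (fun y => g₂₂ y - g₁₁ y)) x)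
          - 2 * pd 0 (pd 1 g₁₂) x := by
  intro x hx
  have hρ₀ : EqOn (pd 0 ρ) (fun y => -1 * pd 0 (pd 0 v₁) y + -1 * pd 1 (pd 1 v₁) y) Ω :=
    fun y hy => by linarith [h4 y hy]
  have hρ₁ : EqOn (pd 1 ρ) (fun y => -1 * pd 0 (pd 0 v₂) y + -1 * pd 1 (pd 1 v₂) y) Ω :=
    fun y hy => by linarith [h5 y hy]
  have hg : EqOn (fun y => g₂₂ y - g₁₁ y) (fun y => 2 * pd 1 v₂ y + -2 * pd 0 v₁ y) Ω :=
    fun y hy => by linarith [h1 y hy, h2 y hy]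
  have hg₁₂ : EqOn g₁₂ (fun y => 1 * pd 1 v₁ y + 1 * pd 0 v₂ y) Ω :=
    fun y hy => by linarith [h3 y hy]
  have ρ₀₀ := pd_eqOn_linear_combination (i := 0) hΩ (hv₁.differentiableOn_pd_pd hΩ)
    (hv₁.differentiableOn_pd_pd hΩ) hρ₀ hx
  have ρ₁₁ := pd_eqOn_linear_combination (i := 1) hΩ (hv₂.differentiableOn_pd_pd hΩ)
    (hv₂.differentiableOn_pd_pd hΩ) hρ₁ hx
  have D₀₀ := pd_pd_eqOn_linear_combination (i := 0) (j := 0) hΩ hv₂ hv₁ hg hx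
  have D₁₁ := pd_pd_eqOn_linear_combination (i := 1) (j := 1) hΩ hv₂ hv₁ hg hx
  have G₀₁ := pd_pd_eqOn_linear_combination (i := 0) (j := 1) hΩ hv₁ hv₂ hg₁₂ hx
  have c₁ := pd_pd_pd_comm_inner (i := 1) (j := 1) (k := 0) hΩ hv₁ hx
  have c₂ := pd_pd_pd_comm_outer (i := 1) (j := 0) (k := 1) hΩ hv₁ hx
  have c₃ := pd_pd_pd_comm_inner (i := 0) (j := 0) (k := 1) hΩ hv₂ hx
  have c₄ := pd_pd_pd_comm_outer (i := 0) (j := 1) (k := 0) hΩ hv₂ hx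
  simp only at ρ₀₀ ρ₁₁ D₀₀ D₁₁ G₀₁
  linarith

/-- In 2D with `σ₀ ≡ 1` and `U_j = e_j`, if `v_1, v_2, ρ ∈ C³(Ω)` satisfy the linearized
system `2∂v_1/∂x_1 + ρ = g_{1,1}`, `2∂v_2/∂x_2 + ρ = g_{2,2}`,
`∂v_1/∂x_2 + ∂v_2/∂x_1 = g_{1,2}`, and `Δv_j = -∂ρ/∂x_j`, then
`Δρ = ½(∂²_{x_1} - ∂²_{x_2})(g_{2,2} - g_{1,1}) - 2 ∂²g_{1,2}/∂x_1∂x_2`. -/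
theorem stmt4 (Ω : Set (EuclideanSpace ℝ (Fin 2))) (hΩ : IsOpen Ω)
    (v₁ v₂ ρ g₁₁ g₂₂ g₁₂ : EuclideanSpace ℝ (Fin 2) → ℝ)
    (hv₁ : ContDiffOn ℝ 3 v₁ Ω) (hv₂ : ContDiffOn ℝ 3 v₂ Ω) (hρ : ContDiffOn ℝ 3 ρ Ω)
    (hg₁₁ : ContDiffOn ℝ 2 g₁₁ Ω) (hg₂₂ : ContDiffOn ℝ 2 g₂₂ Ω) (hg₁₂ : ContDiffOn ℝ 2 g₁₂ Ω)
    (h1 : ∀ x ∈ Ω, 2 * pd 0 v₁ x + ρ x = g₁₁ x)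
    (h2 : ∀ x ∈ Ω, 2 * pd 1 v₂ x + ρ x = g₂₂ x)
    (h3 : ∀ x ∈ Ω, pd 1 v₁ x + pd 0 v₂ x = g₁₂ x)
    (h4 : ∀ x ∈ Ω, pd 0 (pd 0 v₁) x + pd 1 (pd 1 v₁) x = - pd 0 ρ x)
    (h5 : ∀ x ∈ Ω, pd 0 (pd 0 v₂) x + pd 1 (pd 1 v₂) x = - pd 1 ρ x) :
    ∀ x ∈ Ω,
      pd 0 (pd 0 ρ) x + pd 1 (pd 1 ρ) x
        = (1/2) * (pd 0 (pd 0 (fun y => g₂₂ y - g₁₁ y)) x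
            - pd 1 (pd 1 (fun y => g₂₂ y - g₁₁ y)) x)
          - 2 * pd 0 (pd 1 g₁₂) x :=
  stmt4_general Ω hΩ v₁ v₂ ρ g₁₁ g₂₂ g₁₂ hv₁ hv₂ h1 h2 h3 h4 h5

end
end

section
/- Under the same hypotheses as the 2D linearized system with σ₀ ≡ 1 (2∂v_1/∂x_1 + ρ = g_{1,1}, 2∂v_2/∂x_2 + ρ = g_{2,2}, ∂v_1/∂x_2 + ∂v_2/∂x_1 = g_{1,2}, Δv_j = -∂ρ/∂x_j), the first partial derivatives of ρ are determined explicitly: ∂ρ/∂x_1 = ½ ∂(g_{2,2}-g_{1,1})/∂x_1 - ∂g_{1,2}/∂x_2 and ∂ρ/∂x_2 = ½ ∂(g_{1,1}-g_{2,2})/∂x_2 - ∂g_{1,2}/∂x_1. -/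
/-!
Differentiating the first two equations of the system in `x_i` and the third in `x_j`, `ρ`
cancels from `∂_i (g_{j,j} - g_{i,i}) / 2 - ∂_j g_{i,j}`, which equals
`-(∂_i² + ∂_j²) v_i + (∂_i ∂_j - ∂_j ∂_i) v_j`. The commutator vanishes by the symmetry of
second derivatives, and the Laplacian term is `∂_i ρ` by the last equation.
-/

noncomputable section

open Filter Topology

section PartialDerivatives

variable {n : ℕ} {f g : EuclideanSpace ℝ (Fin n) → ℝ} {x : EuclideanSpace ℝ (Fin n)}

lemma pd_congr_of_eventuallyEq (i : Fin n) (h : f =ᶠ[𝓝 x] g) : pd i f x = pd i g x := by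
  simp only [pd, h.fderiv_eq]

lemma pd_fun_add (i : Fin n) (hf : DifferentiableAt ℝ f x) (hg : DifferentiableAt ℝ g x) :
    pd i (fun y => f y + g y) x = pd i f x + pd i g x := by
  simp only [pd, fderiv_fun_add hf hg, add_apply]

lemma pd_fun_sub (i : Fin n) (hf : DifferentiableAt ℝ f x) (hg : DifferentiableAt ℝ g x) :
    pd i (fun y => f y - g y) x = pd i f x - pd i g x := by
  simp only [pd, fderiv_fun_sub hf hg, sub_apply]

lemma pd_const_mul (i : Fin n) (c : ℝ) (hf : DifferentiableAt ℝ f x) :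
    pd i (fun y => c * f y) x = c * pd i f x := by
  simp only [pd, fderiv_const_mul hf, smul_apply, smul_eq_mul]

lemma pd_pd_eq_fderiv_fderiv (hf : DifferentiableAt ℝ (fderiv ℝ f) x) (i j : Fin n) :
    pd i (pd j f) x =
      fderiv ℝ (fderiv ℝ f) x (EuclideanSpace.single i 1) (EuclideanSpace.single j 1) := by
  have hpd : pd j f = fun y => fderiv ℝ f y (EuclideanSpace.single j 1) := rfl
  simp only [pd, hpd, fderiv_clm_apply hf (differentiableAt_const _), fderiv_const_apply,
    ContinuousLinearMap.flip_apply, ContinuousLinearMap.comp_zero, zero_add]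

lemma ContDiffAt.differentiableAt_fderiv (hf : ContDiffAt ℝ 2 f x) :
    DifferentiableAt ℝ (fderiv ℝ f) x :=
  (hf.fderiv_right (m := 1) (by norm_num)).differentiableAt one_ne_zero

lemma ContDiffAt.differentiableAt_pd (hf : ContDiffAt ℝ 2 f x) (i : Fin n) :
    DifferentiableAt ℝ (pd i f) x :=
  hf.differentiableAt_fderiv.clm_apply (differentiableAt_const _)

lemma ContDiffAt.pd_pd_comm (hf : ContDiffAt ℝ 2 f x) (i j : Fin n) :
    pd i (pd j f) x = pd j (pd i f) x := by
  rw [pd_pd_eq_fderiv_fderiv hf.differentiableAt_fderiv,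
    pd_pd_eq_fderiv_fderiv hf.differentiableAt_fderiv]
  exact hf.isSymmSndFDerivAt (by simp) _ _

end PartialDerivatives

lemma pd_eq_of_linearized_system {n : ℕ} {x : EuclideanSpace ℝ (Fin n)} {i j : Fin n}
    {u w ρ gᵢᵢ gⱼⱼ gᵢⱼ : EuclideanSpace ℝ (Fin n) → ℝ}
    (hu : ContDiffAt ℝ 2 u x) (hw : ContDiffAt ℝ 2 w x)
    (hᵢᵢ : ∀ᶠ y in 𝓝 x, 2 * pd i u y + ρ y = gᵢᵢ y)
    (hⱼⱼ : ∀ᶠ y in 𝓝 x, 2 * pd j w y + ρ y = gⱼⱼ y)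
    (hᵢⱼ : ∀ᶠ y in 𝓝 x, pd j u y + pd i w y = gᵢⱼ y)
    (hΔ : pd i (pd i u) x + pd j (pd j u) x = - pd i ρ x) :
    pd i ρ x = (1/2) * pd i (fun y => gⱼⱼ y - gᵢᵢ y) x - pd j gᵢⱼ x := by
  have hdiag : (fun y => gⱼⱼ y - gᵢᵢ y) =ᶠ[𝓝 x] fun y => 2 * pd j w y - 2 * pd i u y := by
    filter_upwards [hᵢᵢ, hⱼⱼ] with y hy₁ hy₂
    rw [← hy₁, ← hy₂]
    ring
  have hoff : gᵢⱼ =ᶠ[𝓝 x] fun y => pd j u y + pd i w y := by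
    filter_upwards [hᵢⱼ] with y hy
    exact hy.symm
  have hdiag' :
      pd i (fun y => gⱼⱼ y - gᵢᵢ y) x = 2 * pd i (pd j w) x - 2 * pd i (pd i u) x := by
    rw [pd_congr_of_eventuallyEq i hdiag,
      pd_fun_sub i ((hw.differentiableAt_pd j).const_mul 2)
        ((hu.differentiableAt_pd i).const_mul 2),
      pd_const_mul i 2 (hw.differentiableAt_pd j), pd_const_mul i 2 (hu.differentiableAt_pd i)]
  have hoff' : pd j gᵢⱼ x = pd j (pd j u) x + pd j (pd i w) x := by
    rw [pd_congr_of_eventuallyEq j hoff,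
      pd_fun_add j (hu.differentiableAt_pd j) (hw.differentiableAt_pd i)]
  rw [hdiag', hoff', hw.pd_pd_comm i j]
  linarith

theorem stmt5_general (Ω : Set (EuclideanSpace ℝ (Fin 2))) (hΩ : IsOpen Ω)
    (v₁ v₂ ρ g₁₁ g₂₂ g₁₂ : EuclideanSpace ℝ (Fin 2) → ℝ)
    (hv₁ : ContDiffOn ℝ 3 v₁ Ω) (hv₂ : ContDiffOn ℝ 3 v₂ Ω)
    (h1 : ∀ x ∈ Ω, 2 * pd 0 v₁ x + ρ x = g₁₁ x)
    (h2 : ∀ x ∈ Ω, 2 * pd 1 v₂ x + ρ x = g₂₂ x)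
    (h3 : ∀ x ∈ Ω, pd 1 v₁ x + pd 0 v₂ x = g₁₂ x)
    (h4 : ∀ x ∈ Ω, pd 0 (pd 0 v₁) x + pd 1 (pd 1 v₁) x = - pd 0 ρ x)
    (h5 : ∀ x ∈ Ω, pd 0 (pd 0 v₂) x + pd 1 (pd 1 v₂) x = - pd 1 ρ x) :
    ∀ x ∈ Ω,
      pd 0 ρ x = (1/2) * pd 0 (fun y => g₂₂ y - g₁₁ y) x - pd 1 g₁₂ x ∧
      pd 1 ρ x = (1/2) * pd 1 (fun y => g₁₁ y - g₂₂ y) x - pd 0 g₁₂ x := by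
  intro x hx
  have hΩx : Ω ∈ 𝓝 x := hΩ.mem_nhds hx
  have hv₁x : ContDiffAt ℝ 2 v₁ x := (hv₁.contDiffAt hΩx).of_le (by norm_num)
  have hv₂x : ContDiffAt ℝ 2 v₂ x := (hv₂.contDiffAt hΩx).of_le (by norm_num)
  have h3' : ∀ y ∈ Ω, pd 0 v₂ y + pd 1 v₁ y = g₁₂ y := fun y hy => by rw [add_comm, h3 y hy]
  exact ⟨pd_eq_of_linearized_system hv₁x hv₂x (mem_of_superset hΩx h1)
      (mem_of_superset hΩx h2) (mem_of_superset hΩx h3) (h4 x hx),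
    pd_eq_of_linearized_system hv₂x hv₁x (mem_of_superset hΩx h2)
      (mem_of_superset hΩx h1) (mem_of_superset hΩx h3') (by linarith [h5 x hx])⟩

/-- Under the hypotheses of the 2D linearized system with `σ₀ ≡ 1`, the first partial
derivatives of `ρ` are determined explicitly:
`∂ρ/∂x_1 = ½ ∂(g_{2,2}-g_{1,1})/∂x_1 - ∂g_{1,2}/∂x_2` and
`∂ρ/∂x_2 = ½ ∂(g_{1,1}-g_{2,2})/∂x_2 - ∂g_{1,2}/∂x_1`. -/
theorem stmt5 (Ω : Set (EuclideanSpace ℝ (Fin 2))) (hΩ : IsOpen Ω)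
    (v₁ v₂ ρ g₁₁ g₂₂ g₁₂ : EuclideanSpace ℝ (Fin 2) → ℝ)
    (hv₁ : ContDiffOn ℝ 3 v₁ Ω) (hv₂ : ContDiffOn ℝ 3 v₂ Ω) (hρ : ContDiffOn ℝ 3 ρ Ω)
    (hg₁₁ : ContDiffOn ℝ 1 g₁₁ Ω) (hg₂₂ : ContDiffOn ℝ 1 g₂₂ Ω) (hg₁₂ : ContDiffOn ℝ 1 g₁₂ Ω)
    (h1 : ∀ x ∈ Ω, 2 * pd 0 v₁ x + ρ x = g₁₁ x)
    (h2 : ∀ x ∈ Ω, 2 * pd 1 v₂ x + ρ x = g₂₂ x)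
    (h3 : ∀ x ∈ Ω, pd 1 v₁ x + pd 0 v₂ x = g₁₂ x)
    (h4 : ∀ x ∈ Ω, pd 0 (pd 0 v₁) x + pd 1 (pd 1 v₁) x = - pd 0 ρ x)
    (h5 : ∀ x ∈ Ω, pd 0 (pd 0 v₂) x + pd 1 (pd 1 v₂) x = - pd 1 ρ x) :
    ∀ x ∈ Ω,
      pd 0 ρ x = (1/2) * pd 0 (fun y => g₂₂ y - g₁₁ y) x - pd 1 g₁₂ x ∧
      pd 1 ρ x = (1/2) * pd 1 (fun y => g₁₁ y - g₂₂ y) x - pd 0 g₁₂ x :=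
  stmt5_general Ω hΩ v₁ v₂ ρ g₁₁ g₂₂ g₁₂ hv₁ hv₂ h1 h2 h3 h4 h5

end
end

section
/- Let W : Ω → ℝ² be a nonvanishing C¹ vector field on Ω ⊂ ℝ², and σ a positive C² function satisfying ∇·(√σ W) = 0 and curl(W/√σ) = 0. Then ∇ ln σ = -(2/|W|²)( W^⊥ (∇×W) + W (∇·W) ), where W^⊥ is the counterclockwise 90° rotation of W and ∇×W := ∂W_2/∂x_1 - ∂W_1/∂x_2. -/
open Real
open scoped RealInnerProductSpace

noncomputable section

def vdiv {n : ℕ} (F : EuclideanSpace ℝ (Fin n) → EuclideanSpace ℝ (Fin n))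
    (x : EuclideanSpace ℝ (Fin n)) : ℝ :=
  ∑ i, fderiv ℝ F x (EuclideanSpace.single i 1) i

/-- The scalar 2D curl `∇×W = ∂W_2/∂x_1 - ∂W_1/∂x_2`. -/
def curl2 (F : EuclideanSpace ℝ (Fin 2) → EuclideanSpace ℝ (Fin 2))
    (x : EuclideanSpace ℝ (Fin 2)) : ℝ :=
  fderiv ℝ F x (EuclideanSpace.single 0 1) 1 - fderiv ℝ F x (EuclideanSpace.single 1 1) 0

/-- Counterclockwise rotation by 90°: `(w₁,w₂) ↦ (-w₂,w₁)`. -/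
def perp (w : EuclideanSpace ℝ (Fin 2)) : EuclideanSpace ℝ (Fin 2) :=
  EuclideanSpace.single 0 (-(w 1)) + EuclideanSpace.single 1 (w 0)

/-! Writing `√σ` and `1/√σ` as `σ ^ (±1/2)`, the product rules for divergence and curl turn the
two hypotheses into `d(ln σ)(W) = -2 ∇·W` and `d(ln σ)(W^⊥) = -2 ∇×W`. Since `W` and `W^⊥` are
orthogonal of the same length `|W|`, these two components determine `∇ ln σ`. -/

lemma apply_eq_sum_mul_apply_single {n : ℕ} (ℓ : EuclideanSpace ℝ (Fin n) →L[ℝ] ℝ)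
    (v : EuclideanSpace ℝ (Fin n)) : ℓ v = ∑ i, v i * ℓ (EuclideanSpace.single i 1) := by
  conv_lhs => rw [← (EuclideanSpace.basisFun (Fin n) ℝ).sum_repr v]
  simp [map_sum]

lemma vdiv_smul {n : ℕ} {f : EuclideanSpace ℝ (Fin n) → ℝ}
    {F : EuclideanSpace ℝ (Fin n) → EuclideanSpace ℝ (Fin n)} {x : EuclideanSpace ℝ (Fin n)}
    (hf : DifferentiableAt ℝ f x) (hF : DifferentiableAt ℝ F x) :
    vdiv (fun y => f y • F y) x = f x * vdiv F x + fderiv ℝ f x (F x) := by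
  simp only [vdiv, fderiv_fun_smul hf hF, apply_eq_sum_mul_apply_single (fderiv ℝ f x) (F x)]
  simp [Finset.mul_sum, Finset.sum_add_distrib, mul_comm]

lemma curl2_smul {f : EuclideanSpace ℝ (Fin 2) → ℝ}
    {F : EuclideanSpace ℝ (Fin 2) → EuclideanSpace ℝ (Fin 2)} {x : EuclideanSpace ℝ (Fin 2)}
    (hf : DifferentiableAt ℝ f x) (hF : DifferentiableAt ℝ F x) :
    curl2 (fun y => f y • F y) x = f x * curl2 F x - fderiv ℝ f x (perp (F x)) := by
  rw [apply_eq_sum_mul_apply_single (fderiv ℝ f x) (perp (F x))]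
  simp [curl2, fderiv_fun_smul hf hF, perp, Fin.sum_univ_two]
  ring

lemma norm_sq_smul_eq_inner_smul_add_inner_perp_smul (v w : EuclideanSpace ℝ (Fin 2)) :
    ‖w‖ ^ 2 • v = ⟪v, w⟫ • w + ⟪v, perp w⟫ • perp w := by
  ext i
  fin_cases i <;>
    simp [perp, EuclideanSpace.norm_sq_eq, EuclideanSpace.inner_eq_star_dotProduct,
      Fin.sum_univ_two] <;>
    ring

lemma hasFDerivAt_rpow_const_of_pos {E : Type*} [NormedAddCommGroup E] [NormedSpace ℝ E]
    {f : E → ℝ} {x : E} (hf : DifferentiableAt ℝ f x) (hpos : 0 < f x) (p : ℝ) :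
    HasFDerivAt (fun y => f y ^ p) ((p * f x ^ p) • fderiv ℝ (fun y => Real.log (f y)) x) x := by
  rw [(hf.hasFDerivAt.log hpos.ne').fderiv, smul_smul, mul_assoc, ← div_eq_mul_inv,
    ← Real.rpow_sub_one hpos.ne']
  exact hf.hasFDerivAt.rpow_const (Or.inl hpos.ne')

section WeightedField

variable {σ : EuclideanSpace ℝ (Fin 2) → ℝ}
  {W : EuclideanSpace ℝ (Fin 2) → EuclideanSpace ℝ (Fin 2)} {x : EuclideanSpace ℝ (Fin 2)}

lemma mul_fderiv_log_apply_eq_of_vdiv_rpow_smul_eq_zero (hσ : DifferentiableAt ℝ σ x)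
    (hpos : 0 < σ x) (hW : DifferentiableAt ℝ W x) (p : ℝ)
    (h : vdiv (fun y => σ y ^ p • W y) x = 0) :
    p * fderiv ℝ (fun y => Real.log (σ y)) x (W x) = -vdiv W x := by
  have hσp := hasFDerivAt_rpow_const_of_pos hσ hpos p
  rw [vdiv_smul hσp.differentiableAt hW, hσp.fderiv, smul_apply, smul_eq_mul] at h
  exact mul_left_cancel₀ (Real.rpow_pos_of_pos hpos p).ne' (by linear_combination h)

lemma mul_fderiv_log_apply_perp_eq_of_curl2_rpow_smul_eq_zero (hσ : DifferentiableAt ℝ σ x)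
    (hpos : 0 < σ x) (hW : DifferentiableAt ℝ W x) (p : ℝ)
    (h : curl2 (fun y => σ y ^ p • W y) x = 0) :
    p * fderiv ℝ (fun y => Real.log (σ y)) x (perp (W x)) = curl2 W x := by
  have hσp := hasFDerivAt_rpow_const_of_pos hσ hpos p
  rw [curl2_smul hσp.differentiableAt hW, hσp.fderiv, smul_apply, smul_eq_mul] at h
  exact mul_left_cancel₀ (Real.rpow_pos_of_pos hpos p).ne' (by linear_combination -h)

end WeightedField

theorem stmt7_general (Ω : Set (EuclideanSpace ℝ (Fin 2)))
    (W : EuclideanSpace ℝ (Fin 2) → EuclideanSpace ℝ (Fin 2))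
    (σ : EuclideanSpace ℝ (Fin 2) → ℝ)
    (hW : ContDiff ℝ 1 W) (hWne : ∀ x ∈ Ω, W x ≠ 0)
    (hσ : ContDiff ℝ 2 σ) (hσpos : ∀ x, 0 < σ x)
    (hdiv : ∀ x ∈ Ω, vdiv (fun y => Real.sqrt (σ y) • W y) x = 0)
    (hcurl : ∀ x ∈ Ω, curl2 (fun y => (Real.sqrt (σ y))⁻¹ • W y) x = 0) :
    ∀ x ∈ Ω,
      gradient (fun y => Real.log (σ y)) x
        = (-(2 / ‖W x‖ ^ 2)) • ((curl2 W x) • perp (W x) + (vdiv W x) • W x) := by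
  intro x hx
  have hσx : DifferentiableAt ℝ σ x := (hσ.differentiable two_ne_zero).differentiableAt
  have hWx : DifferentiableAt ℝ W x := (hW.differentiable one_ne_zero).differentiableAt
  have hsqrt (y) : √(σ y) = σ y ^ (1 / 2 : ℝ) := Real.sqrt_eq_rpow _
  have hsqrt_inv (y) : (√(σ y))⁻¹ = σ y ^ (-(1 / 2) : ℝ) := by
    rw [Real.rpow_neg (hσpos y).le, hsqrt]
  have hW_comp := mul_fderiv_log_apply_eq_of_vdiv_rpow_smul_eq_zero hσx (hσpos x) hWx (1 / 2)
    (by simpa only [hsqrt] using hdiv x hx)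
  have hperp_comp := mul_fderiv_log_apply_perp_eq_of_curl2_rpow_smul_eq_zero hσx (hσpos x) hWx
    (-(1 / 2)) (by simpa only [hsqrt_inv] using hcurl x hx)
  have hnorm : ‖W x‖ ^ 2 ≠ 0 := pow_ne_zero 2 (norm_ne_zero_iff.mpr (hWne x hx))
  rw [← inv_smul_smul₀ hnorm (gradient _ x), norm_sq_smul_eq_inner_smul_add_inner_perp_smul,
    inner_gradient_left, inner_gradient_left,
    show fderiv ℝ (fun y => Real.log (σ y)) x (W x) = -2 * vdiv W x by linarith,
    show fderiv ℝ (fun y => Real.log (σ y)) x (perp (W x)) = -2 * curl2 W x by linarith]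
  module

/-- Let `W` be a nonvanishing `C¹` vector field and `σ` a positive `C²` function with
`∇·(√σ W) = 0` and `curl(W/√σ) = 0`. Then
`∇ ln σ = -(2/|W|²)( W^⊥ (∇×W) + W (∇·W) )`. -/
theorem stmt7 (Ω : Set (EuclideanSpace ℝ (Fin 2))) (hΩ : IsOpen Ω)
    (W : EuclideanSpace ℝ (Fin 2) → EuclideanSpace ℝ (Fin 2))
    (σ : EuclideanSpace ℝ (Fin 2) → ℝ)
    (hW : ContDiff ℝ 1 W) (hWne : ∀ x ∈ Ω, W x ≠ 0)
    (hσ : ContDiff ℝ 2 σ) (hσpos : ∀ x, 0 < σ x)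
    (hdiv : ∀ x ∈ Ω, vdiv (fun y => Real.sqrt (σ y) • W y) x = 0)
    (hcurl : ∀ x ∈ Ω, curl2 (fun y => (Real.sqrt (σ y))⁻¹ • W y) x = 0) :
    ∀ x ∈ Ω,
      gradient (fun y => Real.log (σ y)) x
        = (-(2 / ‖W x‖ ^ 2)) • ((curl2 W x) • perp (W x) + (vdiv W x) • W x) :=
  stmt7_general Ω W σ hW hWne hσ hσpos hdiv hcurl

end
end
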